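/- Let Φ be a reduced crystallographic root system with simple roots α_1, …, α_n, coroot lattice R^∨, coweight lattice Q^∨, and Weyl group W, and let w₀ ∈ W satisfy w₀² = I and w₀ρ̌ = −ρ̌. Let λ ∈ Q^∨ and η ∈ Q^∨ with ⟨α_i, η⟩ = 1 and η − λ ∈ R^∨, and suppose that proj_i(λ − 2ρ̌) = proj_i(η) =: ν. Set ζ := ρ̌ + w₀s_i(λ − ρ̌). Then ζ ∈ (w₀s_i(ν + ℝα_i^∨)) ∩ (η + R^∨). -/

import Mathlib

open scoped RealInnerProductSpace

namespace ADLV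

variable {V : Type*} [NormedAddCommGroup V] [InnerProductSpace ℝ V]

/-- The coroot `α^∨ = 2α/(α,α)` of a root `α`. -/
noncomputable def coroot (α : V) : V := (2 / ⟪α, α⟫) • α

/-- The reflection `s_α : x ↦ x - ⟨α, x⟩ α^∨` in the hyperplane orthogonal to `α`,
as a linear automorphism. -/
noncomputable def sRefl (α : V) (hα : α ≠ 0) : V ≃ₗ[ℝ] V :=
  Module.reflection (f := (innerSL ℝ α : V →ₗ[ℝ] ℝ)) (x := coroot α)
    (by
      have h : ⟪α, α⟫ ≠ 0 := inner_self_ne_zero.mpr hα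
      simp [coroot, real_inner_smul_right]
      field_simp)

/-- The orthogonal projection `proj_α : x ↦ x - ½⟨α, x⟩ α^∨` of `V` onto the
hyperplane `H_α = {x : ⟨α, x⟩ = 0}`. -/
noncomputable def projH (α : V) (x : V) : V := x - (⟪α, x⟫ / 2) • coroot α

/-- The (finite) Weyl group: the group generated by the simple reflections. -/
noncomputable def weylGroup {n : ℕ} (α : Fin n → V) (hα : ∀ j, α j ≠ 0) :
    Subgroup (V ≃ₗ[ℝ] V) :=
  Subgroup.closure (Set.range fun j => sRefl (α j) (hα j))

/-- The coroot lattice `R^∨ = ⊕_j ℤ α_j^∨`. -/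
noncomputable def corootLattice {n : ℕ} (α : Fin n → V) : AddSubgroup V :=
  AddSubgroup.closure (Set.range fun j => coroot (α j))

/-- The coweight lattice `Q^∨ = {x : ⟨α_j, x⟩ ∈ ℤ for all j}`. -/
def coweightLattice {n : ℕ} (α : Fin n → V) : Set V :=
  {x : V | ∀ j, ∃ m : ℤ, ⟪α j, x⟫ = (m : ℝ)}

/-! Since `⟨α_i, ρ̌⟩ = 1`, the reflection `s_i` maps `ρ̌ - α_i^∨` to `ρ̌`, and `proj_i η = proj_i (λ - 2ρ̌)`
puts `λ - 2ρ̌ + α_i^∨ = (λ - ρ̌) - (ρ̌ - α_i^∨)` on the line `ν + ℝα_i^∨`; applying `w₀ s_i` and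
`w₀ ρ̌ = -ρ̌` gives `ζ`. For the lattice part, `ζ - η = (w(λ - ρ̌) - (λ - ρ̌)) - (η - λ)` with
`w = w₀ s_i ∈ W`, and every element of `W` moves a coweight by an element of `R^∨`. -/

lemma sRefl_apply {α : V} (hα : α ≠ 0) (x : V) :
    sRefl α hα x = x - ⟪α, x⟫ • coroot α := by
  simp [sRefl, Module.reflection_apply]

lemma inner_coroot_self {α : V} (hα : α ≠ 0) : ⟪α, coroot α⟫ = 2 := by
  have h : ⟪α, α⟫ ≠ 0 := inner_self_ne_zero.mpr hα
  simp only [coroot, real_inner_smul_right]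
  field_simp

lemma sRefl_sRefl {α : V} (hα : α ≠ 0) (x : V) : sRefl α hα (sRefl α hα x) = x := by
  simp only [sRefl_apply, inner_sub_right, real_inner_smul_right, inner_coroot_self hα]
  module

lemma sRefl_inv {α : V} (hα : α ≠ 0) : (sRefl α hα)⁻¹ = sRefl α hα :=
  inv_eq_of_mul_eq_one_right <| LinearEquiv.ext (sRefl_sRefl hα)

lemma sRefl_sub_coroot_of_inner_eq_one {α x : V} (hα : α ≠ 0) (hx : ⟪α, x⟫ = 1) :
    sRefl α hα (x - coroot α) = x := by
  rw [sRefl_apply, inner_sub_right, hx, inner_coroot_self hα]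
  module

lemma projH_add_smul_coroot (α x : V) : projH α x + (⟪α, x⟫ / 2) • coroot α = x :=
  sub_add_cancel _ _

section Lattices

variable {n : ℕ} (α : Fin n → V)

def coweightSubgroup : AddSubgroup V where
  carrier := coweightLattice α
  zero_mem' j := ⟨0, by simp⟩
  add_mem' {x y} hx hy j := by
    obtain ⟨m, hm⟩ := hx j
    obtain ⟨m', hm'⟩ := hy j
    exact ⟨m + m', by rw [inner_add_right, hm, hm', Int.cast_add]⟩
  neg_mem' {x} hx j := by
    obtain ⟨m, hm⟩ := hx j
    exact ⟨-m, by rw [inner_neg_right, hm, Int.cast_neg]⟩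

lemma coroot_mem_corootLattice (j : Fin n) : coroot (α j) ∈ corootLattice α :=
  AddSubgroup.subset_closure (Set.mem_range_self j)

variable {α}

lemma corootLattice_le_coweightSubgroup
    (hcart : ∀ k j, ∃ m : ℤ, ⟪α k, coroot (α j)⟫ = (m : ℝ)) :
    corootLattice α ≤ coweightSubgroup α := by
  rw [corootLattice, AddSubgroup.closure_le]
  rintro _ ⟨j, rfl⟩ k
  exact hcart k j

lemma sRefl_apply_sub_self_mem_corootLattice (hα : ∀ j, α j ≠ 0) (j : Fin n) {x : V}
    (hx : x ∈ coweightLattice α) : sRefl (α j) (hα j) x - x ∈ corootLattice α := by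
  obtain ⟨m, hm⟩ := hx j
  rw [sRefl_apply, hm, sub_sub_cancel_left, Int.cast_smul_eq_zsmul]
  exact neg_mem (zsmul_mem (coroot_mem_corootLattice α j) m)

lemma weylGroup_apply_sub_self_mem_corootLattice (hα : ∀ j, α j ≠ 0)
    (hcart : ∀ k j, ∃ m : ℤ, ⟪α k, coroot (α j)⟫ = (m : ℝ))
    {w : V ≃ₗ[ℝ] V} (hw : w ∈ weylGroup α hα) {x : V} (hx : x ∈ coweightLattice α) :
    w x - x ∈ corootLattice α := by
  induction hw using Subgroup.closure_induction'' generalizing x with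
  | mem _ hs =>
    obtain ⟨j, rfl⟩ := hs
    exact sRefl_apply_sub_self_mem_corootLattice hα j hx
  | inv_mem _ hs =>
    obtain ⟨j, rfl⟩ := hs
    rw [sRefl_inv]
    exact sRefl_apply_sub_self_mem_corootLattice hα j hx
  | one => simp
  | mul u v _ _ hu hv =>
    have hvx : v x ∈ coweightLattice α := by
      have h := (coweightSubgroup α).add_mem
        (corootLattice_le_coweightSubgroup hcart (hv hx)) (show x ∈ coweightSubgroup α from hx)
      rwa [sub_add_cancel] at h
    have hsplit : (u * v) x - x = (u (v x) - v x) + (v x - x) := by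
      rw [LinearEquiv.mul_apply]; abel
    rw [hsplit]
    exact add_mem (hu hvx) (hv hx)

end Lattices

theorem final_vertex_in_transverse_subspace_general {n : ℕ}
    (α : Fin n → V) (hα : ∀ j, α j ≠ 0)
    -- crystallographic: the Cartan integers `⟨α_k, α_j^∨⟩` are integers
    (hcart : ∀ k j, ∃ m : ℤ, ⟪α k, coroot (α j)⟫ = (m : ℝ))
    -- `ρ̌` is the half-sum of the positive coroots, so `⟨α_j, ρ̌⟩ = 1` for all `j`
    (ρv : V) (hρ : ∀ j, ⟪α j, ρv⟫ = 1)
    (w₀ : V ≃ₗ[ℝ] V) (hw₀W : w₀ ∈ weylGroup α hα)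
    (hw₀ρ : w₀ ρv = -ρv)
    (i : Fin n) (lam η : V)
    (hlam : lam ∈ coweightLattice α)
    (hηlam : η - lam ∈ corootLattice α)
    (hproj : projH (α i) (lam - (2 : ℝ) • ρv) = projH (α i) η) :
    (∃ r : ℝ, ρv + w₀ (sRefl (α i) (hα i) (lam - ρv))
        = w₀ (sRefl (α i) (hα i) (projH (α i) η + r • coroot (α i)))) ∧
    (ρv + w₀ (sRefl (α i) (hα i) (lam - ρv))) - η ∈ corootLattice α := by
  set s := sRefl (α i) (hα i)
  constructor
  · refine ⟨⟪α i, lam - (2 : ℝ) • ρv⟫ / 2 + 1, ?_⟩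
    calc ρv + w₀ (s (lam - ρv))
        = w₀ (s (lam - ρv) - s (ρv - coroot (α i))) := by
          rw [sRefl_sub_coroot_of_inner_eq_one (hα i) (hρ i), map_sub w₀, hw₀ρ]
          abel
      _ = w₀ (s (projH (α i) η + (⟪α i, lam - (2 : ℝ) • ρv⟫ / 2 + 1) • coroot (α i))) := by
          rw [← map_sub, ← hproj, add_smul, one_smul, ← add_assoc, projH_add_smul_coroot]
          congr 2
          module
  · have hw : w₀ * s ∈ weylGroup α hα := mul_mem hw₀W (Subgroup.subset_closure ⟨i, rfl⟩)
    have hρQ : ρv ∈ coweightLattice α := fun j => ⟨1, by rw [hρ j, Int.cast_one]⟩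
    have hlamρ : lam - ρv ∈ coweightLattice α := (coweightSubgroup α).sub_mem hlam hρQ
    have hsplit : ρv + w₀ (s (lam - ρv)) - η
        = ((w₀ * s) (lam - ρv) - (lam - ρv)) - (η - lam) := by
      rw [LinearEquiv.mul_apply]; abel
    rw [hsplit]
    exact sub_mem (weylGroup_apply_sub_self_mem_corootLattice hα hcart hw hlamρ) hηlam

/-- Let `Φ` be a reduced crystallographic root system with simple roots
`α_1, …, α_n`, coroot lattice `R^∨`, coweight lattice `Q^∨` and Weyl group `W`, and let
`w₀ ∈ W` satisfy `w₀² = I` and `w₀ ρ̌ = -ρ̌`.  Let `λ, η ∈ Q^∨` with `⟨α_i, η⟩ = 1` and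
`η - λ ∈ R^∨`, and suppose `proj_i (λ - 2ρ̌) = proj_i (η) =: ν`.  Set
`ζ := ρ̌ + w₀ s_i (λ - ρ̌)`.  Then `ζ ∈ (w₀ s_i (ν + ℝα_i^∨)) ∩ (η + R^∨)`. -/
theorem final_vertex_in_transverse_subspace {n : ℕ}
    (α : Fin n → V) (hα : ∀ j, α j ≠ 0)
    (hlin : LinearIndependent ℝ α)
    -- crystallographic: the Cartan integers `⟨α_k, α_j^∨⟩` are integers
    (hcart : ∀ k j, ∃ m : ℤ, ⟪α k, coroot (α j)⟫ = (m : ℝ))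
    -- `ρ̌` is the half-sum of the positive coroots, so `⟨α_j, ρ̌⟩ = 1` for all `j`
    (ρv : V) (hρ : ∀ j, ⟪α j, ρv⟫ = 1)
    (w₀ : V ≃ₗ[ℝ] V) (hw₀W : w₀ ∈ weylGroup α hα)
    (hw₀2 : w₀ * w₀ = 1) (hw₀ρ : w₀ ρv = -ρv)
    (i : Fin n) (lam η : V)
    (hlam : lam ∈ coweightLattice α) (hη : η ∈ coweightLattice α)
    (hηi : ⟪α i, η⟫ = 1) (hηlam : η - lam ∈ corootLattice α)
    (hproj : projH (α i) (lam - (2 : ℝ) • ρv) = projH (α i) η) :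
    (∃ r : ℝ, ρv + w₀ (sRefl (α i) (hα i) (lam - ρv))
        = w₀ (sRefl (α i) (hα i) (projH (α i) η + r • coroot (α i)))) ∧
    (ρv + w₀ (sRefl (α i) (hα i) (lam - ρv))) - η ∈ corootLattice α :=
  final_vertex_in_transverse_subspace_general α hα hcart ρv hρ w₀ hw₀W hw₀ρ i lam η hlam hηlam hproj

end ADLV
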